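/- Let r₁, r₂, r₃ > 0 and θ₂, θ₃ ∈ ℝ, write R(r) = r - 1/r, and define F = (1 + e^{2iθ₂} + e^{2iθ₃}) - R(r₁)·(R(r₂)e^{iθ₂} + R(r₃)e^{iθ₃}) - R(r₂)R(r₃)e^{i(θ₂+θ₃)} and G = R(r₂)cos θ₃ + R(r₃)cos θ₂ + R(r₁)cos(θ₂ - θ₃) - (1/2)·R(r₁)R(r₂)R(r₃). If F = 0, G = 0, r₁ = 1, and at least one of r₂ = 1 or r₃ = 1 holds, then r₂ = r₃ = 1 and 1 + e^{2iθ₂} + e^{2iθ₃} = 0; consequently {e^{2iθ₂}, e^{2iθ₃}} = {e^{2πi/3}, e^{-2πi/3}}. -/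

import Mathlib

/-- `R(r) = r - 1/r`. -/
noncomputable def RR (r : ℝ) : ℝ := r - 1 / r

/-!
With `r₁ = 1` the obstructions reduce to `F = 1 + e^{2iθ₂} + e^{2iθ₃} - R(r₂)R(r₃)e^{i(θ₂+θ₃)}`
and `G = R(r₂) cos θ₃ + R(r₃) cos θ₂`. If, say, `R(r₂) = 0`, then `F = 0` says that three unit
vectors `1, e^{2iθ₂}, e^{2iθ₃}` sum to zero, which forces them to be the three cube roots of unity.
In particular `cos 2θ₂ = -1/2`, so `cos θ₂ ≠ 0`, and `G = 0` gives `R(r₃) = 0`, i.e. `r₃ = 1`.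
-/

open Complex
open scoped Real

lemma RR_one : RR 1 = 0 := by norm_num [RR]

lemma RR_eq_zero_iff {r : ℝ} (hr : 0 < r) : RR r = 0 ↔ r = 1 := by
  refine ⟨fun h => ?_, fun h => h ▸ RR_one⟩
  rw [RR, sub_eq_zero, eq_div_iff hr.ne'] at h
  nlinarith

namespace Complex

lemma exp_two_pi_I_div_three : exp (2 * π * I / 3) = ⟨-1 / 2, √3 / 2⟩ := by
  rw [show 2 * π * I / 3 = ((π - π / 3 : ℝ) : ℂ) * I by push_cast; ring]
  refine Complex.ext ?_ ?_
  · rw [exp_ofReal_mul_I_re, Real.cos_pi_sub, Real.cos_pi_div_three]; norm_num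
  · rw [exp_ofReal_mul_I_im, Real.sin_pi_sub, Real.sin_pi_div_three]

lemma exp_neg_two_pi_I_div_three : exp (-(2 * π * I / 3)) = ⟨-1 / 2, -(√3 / 2)⟩ := by
  rw [show -(2 * π * I / 3) = ((-(π - π / 3) : ℝ) : ℂ) * I by push_cast; ring]
  refine Complex.ext ?_ ?_
  · rw [exp_ofReal_mul_I_re, Real.cos_neg, Real.cos_pi_sub, Real.cos_pi_div_three]; norm_num
  · rw [exp_ofReal_mul_I_im, Real.sin_neg, Real.sin_pi_sub, Real.sin_pi_div_three]

lemma re_eq_neg_half_of_one_add_add_eq_zero {u v : ℂ} (hu : ‖u‖ = 1) (hv : ‖v‖ = 1)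
    (h : 1 + u + v = 0) : u.re = -1 / 2 := by
  obtain rfl : v = -1 - u := by linear_combination h
  have nu := Complex.sq_norm u
  have nv := Complex.sq_norm (-1 - u)
  simp only [hu, hv, normSq_apply, sub_re, sub_im, neg_re, neg_im, one_re, one_im] at nu nv
  nlinarith

lemma pair_eq_of_one_add_add_eq_zero {u v : ℂ} (hu : ‖u‖ = 1) (hv : ‖v‖ = 1)
    (h : 1 + u + v = 0) :
    ({u, v} : Set ℂ) = {exp (2 * π * I / 3), exp (-(2 * π * I / 3))} := by
  have hure := re_eq_neg_half_of_one_add_add_eq_zero hu hv h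
  have hvre := re_eq_neg_half_of_one_add_add_eq_zero hv hu (by linear_combination h)
  have hvim : v.im = -u.im := by
    have := congrArg im h
    simp only [add_im, one_im, zero_im] at this
    linarith
  have him : u.im ^ 2 = (√3 / 2) ^ 2 := by
    rw [← sq_norm_sub_sq_re, hu, hure, div_pow (√3), Real.sq_sqrt (by norm_num)]; norm_num
  rw [exp_two_pi_I_div_three, exp_neg_two_pi_I_div_three]
  rcases sq_eq_sq_iff_eq_or_eq_neg.1 him with hu_im | hu_im
  · rw [Complex.ext (w := ⟨-1 / 2, √3 / 2⟩) hure hu_im,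
      Complex.ext (w := ⟨-1 / 2, -(√3 / 2)⟩) hvre (by rw [hvim, hu_im])]
  · rw [Set.pair_comm, Complex.ext (w := ⟨-1 / 2, -(√3 / 2)⟩) hure hu_im,
      Complex.ext (w := ⟨-1 / 2, √3 / 2⟩) hvre (by rw [hvim, hu_im, neg_neg])]

end Complex

lemma cos_ne_zero_of_one_add_exp_add_exp_eq_zero {θ θ' : ℝ}
    (h : 1 + exp (2 * θ * I) + exp (2 * θ' * I) = 0) : Real.cos θ ≠ 0 := by
  have hre := re_eq_neg_half_of_one_add_add_eq_zero (by simp [norm_exp]) (by simp [norm_exp]) h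
  rw [← ofReal_ofNat, ← ofReal_mul, exp_ofReal_mul_I_re, Real.cos_two_mul] at hre
  intro h0
  rw [h0] at hre
  norm_num at hre

theorem complexity_two_symmetric_case
    (r₁ r₂ r₃ : ℝ) (hr₂ : 0 < r₂) (hr₃ : 0 < r₃)
    (θ₂ θ₃ : ℝ)
    (hF : (1 + Complex.exp (2 * θ₂ * Complex.I) + Complex.exp (2 * θ₃ * Complex.I)) -
      (RR r₁ : ℂ) * ((RR r₂ : ℂ) * Complex.exp (θ₂ * Complex.I) +
        (RR r₃ : ℂ) * Complex.exp (θ₃ * Complex.I)) -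
      (RR r₂ : ℂ) * (RR r₃ : ℂ) * Complex.exp ((θ₂ + θ₃) * Complex.I) = 0)
    (hG : RR r₂ * Real.cos θ₃ + RR r₃ * Real.cos θ₂ +
      RR r₁ * Real.cos (θ₂ - θ₃) - (1 / 2) * RR r₁ * RR r₂ * RR r₃ = 0)
    (h1 : r₁ = 1) (h23 : r₂ = 1 ∨ r₃ = 1) :
    r₂ = 1 ∧ r₃ = 1 ∧
    1 + Complex.exp (2 * θ₂ * Complex.I) + Complex.exp (2 * θ₃ * Complex.I) = 0 ∧
    ({Complex.exp (2 * θ₂ * Complex.I), Complex.exp (2 * θ₃ * Complex.I)} : Set ℂ) =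
      {Complex.exp (2 * Real.pi * Complex.I / 3),
        Complex.exp (-(2 * Real.pi * Complex.I / 3))} := by
  subst h1
  simp only [RR_one, ofReal_zero, zero_mul, mul_zero, sub_zero, add_zero] at hF hG
  have hRR : RR r₂ = 0 ∧ RR r₃ = 0 := by
    rcases h23 with rfl | rfl <;>
      simp only [RR_one, ofReal_zero, zero_mul, mul_zero, sub_zero, zero_add, add_zero,
        true_and, and_true] at hF hG ⊢
    · exact (mul_eq_zero.1 hG).resolve_right (cos_ne_zero_of_one_add_exp_add_exp_eq_zero hF)
    · exact (mul_eq_zero.1 hG).resolve_right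
        (cos_ne_zero_of_one_add_exp_add_exp_eq_zero (by rwa [add_right_comm] at hF))
  have hsum : 1 + exp (2 * θ₂ * I) + exp (2 * θ₃ * I) = 0 := by
    simpa [hRR] using hF
  refine ⟨(RR_eq_zero_iff hr₂).1 hRR.1, (RR_eq_zero_iff hr₃).1 hRR.2, hsum, ?_⟩
  exact pair_eq_of_one_add_add_eq_zero (by simp [norm_exp]) (by simp [norm_exp]) hsum
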